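/- Let σ : ℝ → ℝ be Lipschitz with constant τ_σ ≥ 0, applied to matrices entrywise. Let Ψ, Ψ′ ∈ ℝ^{n×n}, H, H′ ∈ ℝ^{n×d}, and W ∈ ℝ^{d×d}, and let τ_w, τ_h ≥ 0 satisfy ‖W‖₂ ≤ τ_w and ‖H‖_F ≤ τ_h. Then ‖σ(Ψ H W) − σ(Ψ′ H′ W)‖_F ≤ τ_σ·τ_w·τ_h·‖Ψ − Ψ′‖₂ + τ_σ·τ_w·‖Ψ′‖₂·‖H − H′‖_F. -/
import Mathlib


/-- The ℓ2 operator norm (spectral norm) of a real matrix, i.e. the operator norm of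
the induced linear map between Euclidean spaces. -/
noncomputable def matOpNorm {n d : ℕ} (A : Matrix (Fin n) (Fin d) ℝ) : ℝ :=
  ‖LinearMap.toContinuousLinearMap (Matrix.toEuclideanLin A)‖

/-- The Frobenius norm of a real matrix: the square root of the sum of squares of its
entries. -/
noncomputable def frobNorm {n d : ℕ} (A : Matrix (Fin n) (Fin d) ℝ) : ℝ :=
  Real.sqrt (∑ i, ∑ j, (A i j) ^ 2)

lemma matOpNorm_nonneg {n d : ℕ} (A : Matrix (Fin n) (Fin d) ℝ) : 0 ≤ matOpNorm A :=
  norm_nonneg _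

lemma frobNorm_nonneg {n d : ℕ} (A : Matrix (Fin n) (Fin d) ℝ) : 0 ≤ frobNorm A :=
  Real.sqrt_nonneg _

/-- `frobNorm` as the Euclidean norm of the "flattened" matrix. -/
lemma frobNorm_eq_norm {n d : ℕ} (A : Matrix (Fin n) (Fin d) ℝ) :
    frobNorm A = ‖((WithLp.equiv 2 (Fin n × Fin d → ℝ)).symm fun p => A p.1 p.2 :
      EuclideanSpace ℝ (Fin n × Fin d))‖ := by
  rw [EuclideanSpace.norm_eq, frobNorm, Fintype.sum_prod_type]
  congr 1
  refine Finset.sum_congr rfl fun i _ => Finset.sum_congr rfl fun j _ => ?_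
  simp [sq_abs]

lemma frobNorm_add_le {n d : ℕ} (A B : Matrix (Fin n) (Fin d) ℝ) :
    frobNorm (A + B) ≤ frobNorm A + frobNorm B := by
  rw [frobNorm_eq_norm, frobNorm_eq_norm, frobNorm_eq_norm]
  have : ((WithLp.equiv 2 (Fin n × Fin d → ℝ)).symm fun p => (A + B) p.1 p.2 :
      EuclideanSpace ℝ (Fin n × Fin d)) =
      ((WithLp.equiv 2 (Fin n × Fin d → ℝ)).symm fun p => A p.1 p.2) +
      ((WithLp.equiv 2 (Fin n × Fin d → ℝ)).symm fun p => B p.1 p.2) := rfl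
  rw [this]
  exact norm_add_le _ _

lemma frobNorm_transpose {n d : ℕ} (A : Matrix (Fin n) (Fin d) ℝ) :
    frobNorm A.transpose = frobNorm A := by
  rw [frobNorm, frobNorm, Finset.sum_comm]
  rfl

lemma frobNorm_map_lipschitz {n d : ℕ} (σ : ℝ → ℝ) (τσ : ℝ) (hτσ : 0 ≤ τσ)
    (hσ : ∀ x y : ℝ, |σ x - σ y| ≤ τσ * |x - y|)
    (A B : Matrix (Fin n) (Fin d) ℝ) :
    frobNorm (A.map σ - B.map σ) ≤ τσ * frobNorm (A - B) := by
  rw [frobNorm, frobNorm]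
  have h : (∑ i, ∑ j, ((A.map σ - B.map σ) i j) ^ 2) ≤
      τσ ^ 2 * ∑ i, ∑ j, ((A - B) i j) ^ 2 := by
    rw [Finset.mul_sum]
    refine Finset.sum_le_sum fun i _ => ?_
    rw [Finset.mul_sum]
    refine Finset.sum_le_sum fun j _ => ?_
    have := hσ (A i j) (B i j)
    have h2 : (σ (A i j) - σ (B i j)) ^ 2 ≤ (τσ * |A i j - B i j|) ^ 2 := by
      rw [← sq_abs]
      exact pow_le_pow_left₀ (abs_nonneg _) this 2
    simpa [Matrix.map, Matrix.sub_apply, mul_pow, sq_abs] using h2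
  calc Real.sqrt (∑ i, ∑ j, ((A.map σ - B.map σ) i j) ^ 2)
      ≤ Real.sqrt (τσ ^ 2 * ∑ i, ∑ j, ((A - B) i j) ^ 2) := Real.sqrt_le_sqrt h
    _ = τσ * Real.sqrt (∑ i, ∑ j, ((A - B) i j) ^ 2) := by
        rw [Real.sqrt_mul (by positivity), Real.sqrt_sq hτσ]

/-- Euclidean norm of a column of a matrix product. -/
lemma frobNorm_mul_left {n m d : ℕ} (A : Matrix (Fin n) (Fin m) ℝ)
    (X : Matrix (Fin m) (Fin d) ℝ) :
    frobNorm (A * X) ≤ matOpNorm A * frobNorm X := by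
  have hA : 0 ≤ matOpNorm A := matOpNorm_nonneg A
  have key : ∀ j : Fin d,
      (∑ i, ((A * X) i j) ^ 2) ≤ matOpNorm A ^ 2 * ∑ i, (X i j) ^ 2 := by
    intro j
    set x : EuclideanSpace ℝ (Fin m) := (WithLp.equiv 2 (Fin m → ℝ)).symm fun k => X k j
    have hx : ‖x‖ = Real.sqrt (∑ k, (X k j) ^ 2) := by
      rw [EuclideanSpace.norm_eq]
      congr 1
      exact Finset.sum_congr rfl fun k _ => by simp [x, sq_abs]
    have hAx : (LinearMap.toContinuousLinearMap (Matrix.toEuclideanLin A)) x =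
        (WithLp.equiv 2 (Fin n → ℝ)).symm (A.mulVec fun k => X k j) := rfl
    have hAxnorm : ‖(LinearMap.toContinuousLinearMap (Matrix.toEuclideanLin A)) x‖ =
        Real.sqrt (∑ i, ((A * X) i j) ^ 2) := by
      rw [hAx, EuclideanSpace.norm_eq]
      congr 1
      refine Finset.sum_congr rfl fun i _ => ?_
      simp [Matrix.mul_apply, Matrix.mulVec, dotProduct, sq_abs]
    have hle := (LinearMap.toContinuousLinearMap (Matrix.toEuclideanLin A)).le_opNorm x
    rw [hAxnorm, hx] at hle
    have hsq := pow_le_pow_left₀ (Real.sqrt_nonneg _) hle 2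
    rw [Real.sq_sqrt (by positivity), mul_pow, Real.sq_sqrt (by positivity)] at hsq
    exact hsq
  rw [frobNorm, frobNorm, Finset.sum_comm, Finset.sum_comm (s := Finset.univ)
    (t := Finset.univ) (f := fun i j => (X i j) ^ 2)]
  calc Real.sqrt (∑ j, ∑ i, ((A * X) i j) ^ 2)
      ≤ Real.sqrt (∑ j, matOpNorm A ^ 2 * ∑ i, (X i j) ^ 2) :=
        Real.sqrt_le_sqrt (Finset.sum_le_sum fun j _ => key j)
    _ = matOpNorm A * Real.sqrt (∑ j, ∑ i, (X i j) ^ 2) := by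
        rw [← Finset.mul_sum, Real.sqrt_mul (by positivity), Real.sqrt_sq hA]

open scoped Matrix.Norms.L2Operator in
lemma matOpNorm_eq {n d : ℕ} (A : Matrix (Fin n) (Fin d) ℝ) : matOpNorm A = ‖A‖ := rfl

lemma matOpNorm_transpose {n d : ℕ} (A : Matrix (Fin n) (Fin d) ℝ) :
    matOpNorm A.transpose = matOpNorm A := by
  rw [matOpNorm_eq, matOpNorm_eq]
  have : A.transpose = A.conjTranspose := by
    ext i j; simp [Matrix.conjTranspose]
  rw [this]
  exact Matrix.l2_opNorm_conjTranspose A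

lemma frobNorm_mul_right {n m d : ℕ} (X : Matrix (Fin n) (Fin m) ℝ)
    (W : Matrix (Fin m) (Fin d) ℝ) :
    frobNorm (X * W) ≤ matOpNorm W * frobNorm X := by
  have h := frobNorm_mul_left W.transpose X.transpose
  rw [← Matrix.transpose_mul, frobNorm_transpose, frobNorm_transpose,
    matOpNorm_transpose] at h
  exact h

/-- Single-layer perturbation bound for the graph-convolution layer `H ↦ σ(Ψ H W)`:
`‖σ(Ψ H W) − σ(Ψ′ H′ W)‖_F ≤ τ_σ τ_w τ_h ‖Ψ − Ψ′‖₂ + τ_σ τ_w ‖Ψ′‖₂ ‖H − H′‖_F`. -/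
theorem single_layer_perturbation_bound {n d : ℕ} (σ : ℝ → ℝ) (τσ : ℝ) (hτσ : 0 ≤ τσ)
    (hσ : ∀ x y : ℝ, |σ x - σ y| ≤ τσ * |x - y|)
    (Ψ Ψ' : Matrix (Fin n) (Fin n) ℝ) (H H' : Matrix (Fin n) (Fin d) ℝ)
    (W : Matrix (Fin d) (Fin d) ℝ) (τw τh : ℝ) (hτw : 0 ≤ τw) (hτh : 0 ≤ τh)
    (hW : matOpNorm W ≤ τw) (hH : frobNorm H ≤ τh) :
    frobNorm ((Ψ * H * W).map σ - (Ψ' * H' * W).map σ) ≤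
      τσ * τw * τh * matOpNorm (Ψ - Ψ') + τσ * τw * matOpNorm Ψ' * frobNorm (H - H') := by
  have h1 : frobNorm ((Ψ * H * W).map σ - (Ψ' * H' * W).map σ) ≤
      τσ * frobNorm (Ψ * H * W - Ψ' * H' * W) :=
    frobNorm_map_lipschitz σ τσ hτσ hσ _ _
  have hsplit : Ψ * H * W - Ψ' * H' * W = ((Ψ - Ψ') * H) * W + (Ψ' * (H - H')) * W := by
    rw [Matrix.sub_mul, Matrix.sub_mul, Matrix.mul_sub, Matrix.sub_mul]
    abel
  have h2 : frobNorm (Ψ * H * W - Ψ' * H' * W) ≤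
      frobNorm (((Ψ - Ψ') * H) * W) + frobNorm ((Ψ' * (H - H')) * W) := by
    rw [hsplit]; exact frobNorm_add_le _ _
  have h3 : frobNorm (((Ψ - Ψ') * H) * W) ≤ τw * (τh * matOpNorm (Ψ - Ψ')) := by
    calc frobNorm (((Ψ - Ψ') * H) * W) ≤ matOpNorm W * frobNorm ((Ψ - Ψ') * H) :=
          frobNorm_mul_right _ _
      _ ≤ τw * frobNorm ((Ψ - Ψ') * H) := by
          apply mul_le_mul_of_nonneg_right hW (frobNorm_nonneg _)
      _ ≤ τw * (matOpNorm (Ψ - Ψ') * frobNorm H) := by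
          apply mul_le_mul_of_nonneg_left (frobNorm_mul_left _ _) hτw
      _ ≤ τw * (matOpNorm (Ψ - Ψ') * τh) := by
          apply mul_le_mul_of_nonneg_left
            (mul_le_mul_of_nonneg_left hH (matOpNorm_nonneg _)) hτw
      _ = τw * (τh * matOpNorm (Ψ - Ψ')) := by ring
  have h4 : frobNorm ((Ψ' * (H - H')) * W) ≤ τw * (matOpNorm Ψ' * frobNorm (H - H')) := by
    calc frobNorm ((Ψ' * (H - H')) * W) ≤ matOpNorm W * frobNorm (Ψ' * (H - H')) :=
          frobNorm_mul_right _ _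
      _ ≤ τw * frobNorm (Ψ' * (H - H')) := by
          apply mul_le_mul_of_nonneg_right hW (frobNorm_nonneg _)
      _ ≤ τw * (matOpNorm Ψ' * frobNorm (H - H')) := by
          apply mul_le_mul_of_nonneg_left (frobNorm_mul_left _ _) hτw
  calc frobNorm ((Ψ * H * W).map σ - (Ψ' * H' * W).map σ)
      ≤ τσ * frobNorm (Ψ * H * W - Ψ' * H' * W) := h1
    _ ≤ τσ * (τw * (τh * matOpNorm (Ψ - Ψ')) + τw * (matOpNorm Ψ' * frobNorm (H - H'))) := by
        apply mul_le_mul_of_nonneg_left (h2.trans (add_le_add h3 h4)) hτσ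
    _ = τσ * τw * τh * matOpNorm (Ψ - Ψ') + τσ * τw * matOpNorm Ψ' * frobNorm (H - H') := by
        ring
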